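/- Reformulation of the universal marker property: for a Boolean network f and a marker M, all minimal trap spaces of f match M if and only if for every configuration x that does not match M there exists a configuration y ∈ c(TS_f(x)) with c(TS_f(y)) ≠ c(TS_f(x)). -/

import Mathlib

/-- The set of vertices of a subcube `h : Fin n → Option Bool`. -/
def vertices {n : ℕ} (h : Fin n → Option Bool) : Set (Fin n → Bool) :=
  {x | ∀ (i : Fin n) (b : Bool), h i = some b → x i = b}

/-- A subcube `h` is a trap space of the Boolean network `f` if it is closed by `f`. -/
def IsTrapSpace {n : ℕ} (f : (Fin n → Bool) → (Fin n → Bool))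
    (h : Fin n → Option Bool) : Prop :=
  ∀ x ∈ vertices h, f x ∈ vertices h

/-- A trap space is minimal if no trap space has a strictly smaller vertex set. -/
def IsMinimalTrapSpace {n : ℕ} (f : (Fin n → Bool) → (Fin n → Bool))
    (h : Fin n → Option Bool) : Prop :=
  IsTrapSpace f h ∧ ∀ h', IsTrapSpace f h' → ¬ (vertices h' ⊂ vertices h)

/-- `h` is the smallest trap space of `f` containing the configuration `x` (i.e. `TS_f(x)`). -/
def IsSmallestTrapSpace {n : ℕ} (f : (Fin n → Bool) → (Fin n → Bool))
    (x : Fin n → Bool) (h : Fin n → Option Bool) : Prop :=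
  IsTrapSpace f h ∧ x ∈ vertices h ∧
    ∀ h', IsTrapSpace f h' → x ∈ vertices h' → vertices h ⊆ vertices h'

/-- A configuration `x` matches a marker `M`. -/
def confMatches {n : ℕ} (x : Fin n → Bool) (M : Fin n → Option Bool) : Prop :=
  ∀ (i : Fin n) (b : Bool), M i = some b → x i = b

/-- A subcube `h` matches a marker `M`. -/
def subcubeMatches {n : ℕ} (h M : Fin n → Option Bool) : Prop :=
  ∀ (i : Fin n) (b : Bool), M i = some b → h i = some b

/-- The perturbed Boolean network `f/P`. -/
def perturb {n : ℕ} (f : (Fin n → Bool) → (Fin n → Bool))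
    (P : Fin n → Option Bool) : (Fin n → Bool) → (Fin n → Bool) :=
  fun x i => (P i).getD (f x i)

/-!
A subcube is never empty, and two subcubes through a common point intersect in a subcube; hence
trap spaces through `x` are closed under intersection and `TS_f(x)` exists. A minimal trap space
`h` equals `TS_f(x)` for every `x ∈ c(h)`, and conversely `TS_f(x)` is minimal as soon as
`TS_f(y) = TS_f(x)` for all `y ∈ c(TS_f(x))`. Finally, `h ⊨ M` iff every vertex of `h` matches
`M`, because a free coordinate of `h` takes both values on `c(h)`.
-/

section Subcube

variable {n : ℕ}

lemma getD_mem_vertices (h : Fin n → Option Bool) (b : Bool) :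
    (fun i => (h i).getD b) ∈ vertices h := by
  intro i c hc
  simp [hc]

lemma vertices_nonempty (h : Fin n → Option Bool) : (vertices h).Nonempty :=
  ⟨_, getD_mem_vertices h false⟩

lemma vertices_or {h₁ h₂ : Fin n → Option Bool} {x : Fin n → Bool}
    (hx₁ : x ∈ vertices h₁) (hx₂ : x ∈ vertices h₂) :
    vertices (fun i => (h₁ i).or (h₂ i)) = vertices h₁ ∩ vertices h₂ := by
  ext y
  constructor
  · intro hy
    refine ⟨fun i b hb => hy i b (by simp [hb]), fun i b hb => ?_⟩
    cases hc : h₁ i with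
    | none => exact hy i b (by simp [hc, hb])
    | some b' =>
      obtain rfl : b' = b := (hx₁ i b' hc).symm.trans (hx₂ i b hb)
      exact hy i b' (by simp [hc])
  · rintro ⟨hy₁, hy₂⟩ i b (hb : (h₁ i).or (h₂ i) = some b)
    cases hc : h₁ i with
    | none => rw [hc, Option.none_or] at hb; exact hy₂ i b hb
    | some b' => rw [hc, Option.some_or, Option.some_inj] at hb; exact hb ▸ hy₁ i b' hc

lemma confMatches_of_subcubeMatches {h M : Fin n → Option Bool} {x : Fin n → Bool}
    (hM : subcubeMatches h M) (hx : x ∈ vertices h) : confMatches x M :=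
  fun i b hi => hx i b (hM i b hi)

lemma subcubeMatches_of_forall_confMatches {h M : Fin n → Option Bool}
    (hM : ∀ x ∈ vertices h, confMatches x M) : subcubeMatches h M := by
  intro i b hi
  cases hc : h i with
  | some b' => rw [← hM _ (getD_mem_vertices h false) i b hi]; simp [hc]
  | none =>
    have hx : Function.update (fun j => (h j).getD false) i (!b) ∈ vertices h := by
      intro j c hj
      by_cases hji : j = i
      · subst hji; simp [hc] at hj
      · simp [hji, hj]
    simpa using hM _ hx i b hi

end Subcube

section TrapSpace

variable {n : ℕ} {f : (Fin n → Bool) → (Fin n → Bool)}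

lemma IsTrapSpace.or {h₁ h₂ : Fin n → Option Bool} {x : Fin n → Bool}
    (t₁ : IsTrapSpace f h₁) (t₂ : IsTrapSpace f h₂)
    (hx₁ : x ∈ vertices h₁) (hx₂ : x ∈ vertices h₂) :
    IsTrapSpace f (fun i => (h₁ i).or (h₂ i)) := by
  show Set.MapsTo f _ _
  rw [vertices_or hx₁ hx₂]
  exact Set.MapsTo.inter_inter t₁ t₂

lemma exists_isSmallestTrapSpace (f : (Fin n → Bool) → (Fin n → Bool)) (x : Fin n → Bool) :
    ∃ h, IsSmallestTrapSpace f x h := by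
  obtain ⟨h, ⟨th, hx⟩, hfewest⟩ := Set.exists_min_image
    {h : Fin n → Option Bool | IsTrapSpace f h ∧ x ∈ vertices h} (fun h => (vertices h).ncard)
    (Set.toFinite _) ⟨fun _ => none, fun _ _ => by simp [vertices], by simp [vertices]⟩
  refine ⟨h, th, hx, fun h' th' hx' => ?_⟩
  have hmeet := vertices_or hx hx'
  have hsub : vertices (fun i => (h i).or (h' i)) ⊆ vertices h :=
    hmeet ▸ Set.inter_subset_left
  have heq := Set.eq_of_subset_of_ncard_le hsub
    (hfewest _ ⟨th.or th' hx hx', hmeet ▸ ⟨hx, hx'⟩⟩) (Set.toFinite _)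
  rw [← heq, hmeet]
  exact Set.inter_subset_right

lemma IsSmallestTrapSpace.vertices_eq_of_isMinimalTrapSpace {x : Fin n → Bool}
    {tsx h : Fin n → Option Bool} (htsx : IsSmallestTrapSpace f x tsx)
    (hh : IsMinimalTrapSpace f h) (hx : x ∈ vertices h) : vertices tsx = vertices h :=
  (htsx.2.2 h hh.1 hx).eq_of_not_ssubset (hh.2 tsx htsx.1)

lemma IsSmallestTrapSpace.isMinimalTrapSpace {x : Fin n → Bool} {tsx : Fin n → Option Bool}
    (htsx : IsSmallestTrapSpace f x tsx)
    (hstable : ∀ y ∈ vertices tsx,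
      ∃ tsy, IsSmallestTrapSpace f y tsy ∧ vertices tsy = vertices tsx) :
    IsMinimalTrapSpace f tsx := by
  refine ⟨htsx.1, fun h' th' hss => ?_⟩
  obtain ⟨y, hy⟩ := vertices_nonempty h'
  obtain ⟨tsy, htsy, heq⟩ := hstable y (hss.subset hy)
  exact hss.2 (heq ▸ htsy.2.2 h' th' hy)

end TrapSpace

/-- reformulation of the universal marker property. -/
theorem universal_marker_property_iff {n : ℕ}
    (f : (Fin n → Bool) → (Fin n → Bool)) (M : Fin n → Option Bool) :
    (∀ h : Fin n → Option Bool, IsMinimalTrapSpace f h → subcubeMatches h M) ↔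
      (∀ x : Fin n → Bool, ¬ confMatches x M →
        ∀ tsx : Fin n → Option Bool, IsSmallestTrapSpace f x tsx →
          ∃ y ∈ vertices tsx, ∀ tsy : Fin n → Option Bool,
            IsSmallestTrapSpace f y tsy → vertices tsy ≠ vertices tsx) := by
  constructor
  · intro H x hxM tsx htsx
    by_contra! hstable
    exact hxM <| confMatches_of_subcubeMatches (H tsx (htsx.isMinimalTrapSpace hstable)) htsx.2.1
  · intro H h hh
    refine subcubeMatches_of_forall_confMatches fun x hx => ?_
    by_contra hxM
    obtain ⟨tsx, htsx⟩ := exists_isSmallestTrapSpace f x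
    obtain ⟨y, hy, hne⟩ := H x hxM tsx htsx
    obtain ⟨tsy, htsy⟩ := exists_isSmallestTrapSpace f y
    have hx_eq := htsx.vertices_eq_of_isMinimalTrapSpace hh hx
    have hy_eq := htsy.vertices_eq_of_isMinimalTrapSpace hh (hx_eq ▸ hy)
    exact hne tsy htsy (hy_eq.trans hx_eq.symm)
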